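/- arXiv:2510.18591 — 3 statements merged into one kernel-verified Lean document; each statement's English description precedes it below -/
import Mathlib

section
/- Let S1 be a nonempty finite multiset of reals and S2 a nonempty finite multiset of reals with elements s_1 ≥ s_2 ≥ ... ≥ s_k in descending order. For every sub-multiset T ⊆ S2, the mean of S1 ∪ T is at most max_{0 ≤ i ≤ k} ( (Σ_{s∈S1} s + Σ_{j≤i} s_j) / (|S1| + i) ). -/
/-! Take `i = |T|`: any `|T|` entries of a descending list sum to at most its first `|T|`
entries, so `S1 + T` and `S1` together with that prefix have the same size and the latter has
the larger sum. -/

section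

variable {α : Type*} [AddCommMonoid α] [Preorder α] [IsOrderedAddMonoid α]

theorem List.sum_take_le_sum_take_cons {a : α} {l : List α} (hl : (a :: l).Pairwise (· ≥ ·))
    {n : ℕ} (hn : n ≤ l.length) : (l.take n).sum ≤ ((a :: l).take n).sum := by
  induction l generalizing a n with
  | nil => simp [Nat.le_zero.mp hn]
  | cons b l ih =>
    cases n with
    | zero => simp
    | succ n =>
      have hba : b ≤ a := List.rel_of_pairwise_cons hl List.mem_cons_self
      simpa only [List.take_succ_cons, List.sum_cons] using
        add_le_add hba (ih hl.of_cons (Nat.le_of_succ_le_succ hn))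

theorem List.Sublist.sum_le_sum_take_of_pairwise_ge {s l : List α} (hsl : List.Sublist s l)
    (hl : l.Pairwise (· ≥ ·)) : s.sum ≤ (l.take s.length).sum := by
  induction hsl with
  | slnil => simp
  | cons a hsl ih => exact (ih hl.of_cons).trans (List.sum_take_le_sum_take_cons hl hsl.length_le)
  | cons_cons a _ ih => simpa using add_le_add_right (ih hl.of_cons) a

theorem Multiset.sum_le_sum_take_of_le_coe {T : Multiset α} {l : List α}
    (hl : l.Pairwise (· ≥ ·)) (hT : T ≤ l) : T.sum ≤ (l.take (card T)).sum := by
  rcases T with ⟨t⟩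
  obtain ⟨s, hst, hsl⟩ := Multiset.coe_le.mp hT
  rw [Multiset.quot_mk_to_coe'', ← Multiset.coe_eq_coe.mpr hst, Multiset.sum_coe,
    Multiset.coe_card]
  exact hsl.sum_le_sum_take_of_pairwise_ge hl

end

theorem stmt9_general (S1 T : Multiset ℝ) (l : List ℝ) (hl : List.Pairwise (· ≥ ·) l)
    (hT : T ≤ (l : Multiset ℝ)) :
    ∃ i ≤ l.length,
      (S1 + T).sum / ((Multiset.card (S1 + T) : ℕ) : ℝ) ≤
        (S1.sum + (l.take i).sum) / (((Multiset.card S1 : ℕ) : ℝ) + (i : ℝ)) := by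
  refine ⟨Multiset.card T, by simpa using Multiset.card_le_card hT, ?_⟩
  have hsum : T.sum ≤ (l.take (Multiset.card T)).sum := Multiset.sum_le_sum_take_of_le_coe hl hT
  rw [Multiset.card_add, Multiset.sum_add]
  push_cast
  gcongr

/-- for `S1` nonempty and `S2` given as a descending list `l`
(`s_1 ≥ s_2 ≥ ... ≥ s_k`), for every sub-multiset `T` of `S2`, the mean of
`S1 ∪ T` is at most the maximum over `0 ≤ i ≤ k` of
`(Σ S1 + Σ_{j ≤ i} s_j)/(|S1| + i)` (prefixes of the descending order). -/
theorem stmt9 (S1 T : Multiset ℝ) (l : List ℝ) (hl : List.Pairwise (· ≥ ·) l)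
    (hS1 : S1 ≠ 0) (hT : T ≤ (l : Multiset ℝ)) :
    ∃ i ≤ l.length,
      (S1 + T).sum / ((Multiset.card (S1 + T) : ℕ) : ℝ) ≤
        (S1.sum + (l.take i).sum) / (((Multiset.card S1 : ℕ) : ℝ) + (i : ℝ)) :=
  stmt9_general S1 T l hl hT
end

section
/- The adversarial robustness problem for GNNs with sum aggregation is coNP-hard: there exists a fixed 2-layer GNN A with sum aggregation such that deciding, given a graph G, a vertex v, a set of fragile edges F, a global budget Δ, and a class c, whether A is adversarially robust for v with class c, is coNP-hard (by reduction from subset-sum). -/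
/-- An incomplete graph: `edges`, `unk` (unknown edges), and `non` (non-edges)
partition `V × V`. -/
structure IncGraph (V : Type) [Fintype V] [DecidableEq V] where
  edges : Finset (V × V)
  unk : Finset (V × V)
  non : Finset (V × V)
  cover : ∀ p : V × V, p ∈ edges ∨ p ∈ unk ∨ p ∈ non
  disj₁ : ∀ p : V × V, ¬(p ∈ edges ∧ p ∈ unk)
  disj₂ : ∀ p : V × V, ¬(p ∈ edges ∧ p ∈ non)
  disj₃ : ∀ p : V × V, ¬(p ∈ unk ∧ p ∈ non)

variable {V : Type} [Fintype V] [DecidableEq V]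

/-- `H2` refines `H1`. -/
def refines (H2 H1 : IncGraph V) : Prop :=
  H2.edges ⊆ H1.edges ∪ H1.unk ∧ H2.unk ⊆ H1.unk ∧ H2.non ⊆ H1.non ∪ H1.unk

/-- A completion of `H` is a normal graph (no unknown edges) refining `H`. -/
def isCompletion (G H : IncGraph V) : Prop := G.unk = ∅ ∧ refines G H

/-- Distance: number of pairs that are a normal edge in one graph and a non-edge in the other. -/
def gdist (H1 H2 : IncGraph V) : ℕ :=
  ((H1.edges ∩ H2.non) ∪ (H1.non ∩ H2.edges)).card

/-- ReLU. -/
def relu (x : ℝ) : ℝ := max x 0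

/-- Sum of the features of the (incoming) neighbors of `v`. -/
def nbrSum {k : ℕ} (G : IncGraph V) (f : V → Fin k → ℝ) (v : V) : Fin k → ℝ :=
  ∑ u ∈ Finset.univ.filter (fun u => (u, v) ∈ G.edges), f u

/-- One GNN layer with sum aggregation:
`v ↦ ReLU(C·f(v) + A·Σ_{u ∈ N(v)} f(u) + b)`. -/
noncomputable def layer {dIn dOut : ℕ} (C A : Matrix (Fin dOut) (Fin dIn) ℝ)
    (b : Fin dOut → ℝ) (G : IncGraph V) (f : V → Fin dIn → ℝ) (v : V) :
    Fin dOut → ℝ :=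
  fun i => relu ((C.mulVec (f v) + A.mulVec (nbrSum G f v) + b) i)

/-- Membership in the admissible perturbation space `Q(G, F, Δ)`:
`E \ F ⊆ E' ⊆ E ∪ F` and at most `Δ` edges toggled. -/
def inPerturb (G G' : IncGraph V) (F : Finset (V × V)) (Δ : ℕ) : Prop :=
  G.edges \ F ⊆ G'.edges ∧ G'.edges ⊆ G.edges ∪ F ∧
    (G.edges \ G'.edges).card + (G'.edges \ G.edges).card ≤ Δ
-- auxiliary definitions and lemmas
open Finset in
def mkG {V : Type} [Fintype V] [DecidableEq V] (E : Finset (V × V)) : IncGraph V where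
  edges := E
  unk := ∅
  non := Eᶜ
  cover := by intro p; by_cases h : p ∈ E <;> simp [h]
  disj₁ := by simp
  disj₂ := by intro p; simp
  disj₃ := by simp

noncomputable def A1m : Matrix (Fin 2) (Fin 1) ℝ := Matrix.of ![![1], ![-1]]
noncomputable def C2m : Matrix (Fin 2) (Fin 2) ℝ := Matrix.of ![![1, 1], ![0, 0]]
noncomputable def b2v : Fin 2 → ℝ := ![-(1/2), 1/4]

lemma eval_out {V : Type} [Fintype V] [DecidableEq V] (G' : IncGraph V)
    (X : V → Fin 1 → ℝ) (v : V) (c' : Fin 2) :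
    layer C2m 0 b2v G' (fun u => layer (0 : Matrix (Fin 2) (Fin 1) ℝ) A1m 0 G' X u) v c'
      = if c' = 0 then relu (relu (nbrSum G' X v 0) + relu (-(nbrSum G' X v 0)) - 1/2)
        else 1/4 := by
  fin_cases c' <;>
    simp [layer, A1m, C2m, b2v, Matrix.mulVec, dotProduct, Fin.sum_univ_two,
      Fin.sum_univ_one, Matrix.zero_mulVec] <;>
    norm_num [relu, sub_eq_add_neg]

noncomputable def feat (n : ℕ) (s : Fin n → ℕ) (t : ℕ) : Fin (n + 2) → ℝ :=
  Fin.cases 0 (Fin.cases (-(t : ℝ)) (fun i => (s i : ℝ)))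

lemma feat_zero {n : ℕ} (s : Fin n → ℕ) (t : ℕ) : feat n s t 0 = 0 := by
  simp [feat]

lemma feat_one {n : ℕ} (s : Fin n → ℕ) (t : ℕ) : feat n s t 1 = -(t : ℝ) := by
  rw [show (1 : Fin (n + 2)) = ((0 : Fin (n + 1)).succ) from Fin.succ_zero_eq_one.symm]
  unfold feat
  rw [Fin.cases_succ, Fin.cases_zero]

lemma feat_ss {n : ℕ} (s : Fin n → ℕ) (t : ℕ) (i : Fin n) :
    feat n s t i.succ.succ = (s i : ℝ) := by
  simp [feat]

lemma ss_ne_one {n : ℕ} (i : Fin n) : (i.succ.succ : Fin (n + 2)) ≠ 1 := by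
  intro h
  rw [← Fin.succ_zero_eq_one] at h
  exact Fin.succ_ne_zero i (Fin.succ_injective _ h)

lemma exists_ss {n : ℕ} (x : Fin (n + 2)) (h0 : x ≠ 0) (h1 : x ≠ 1) :
    ∃ i : Fin n, x = i.succ.succ := by
  induction x using Fin.cases with
  | zero => exact absurd rfl h0
  | succ j =>
    induction j using Fin.cases with
    | zero => exact absurd Fin.succ_zero_eq_one h1
    | succ i => exact ⟨i, rfl⟩

lemma nbr_eq {n : ℕ} (s : Fin n → ℕ) (t : ℕ)
    (E' : Finset (Fin (n + 2) × Fin (n + 2)))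
    (h1 : ((1 : Fin (n + 2)), (0 : Fin (n + 2))) ∈ E') :
    ∑ u ∈ Finset.univ.filter (fun u => (u, (0 : Fin (n + 2))) ∈ E'), feat n s t u
      = -(t : ℝ) + ∑ i ∈ Finset.univ.filter
          (fun i : Fin n => ((i.succ.succ : Fin (n + 2)), (0 : Fin (n + 2))) ∈ E'),
          (s i : ℝ) := by
  rw [Finset.sum_filter, Fin.sum_univ_succ, Fin.sum_univ_succ, Finset.sum_filter]
  simp [feat_zero, feat_one, feat_ss, Fin.succ_zero_eq_one, h1]

/-- coNP-hardness via reduction from subset-sum: there is a fixed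
2-layer GNN with sum aggregation (input dimension 1, hidden and output
dimension 2) such that every positive subset-sum instance `(s, t)` maps to a
robustness instance `(X, G, v, F, Δ, c)` on which the GNN is adversarially
robust for `v` with class `c` iff the subset-sum instance has no solution. -/
theorem stmt16 :
    ∃ (C1 A1 : Matrix (Fin 2) (Fin 1) ℝ) (b1 : Fin 2 → ℝ)
      (C2 A2 : Matrix (Fin 2) (Fin 2) ℝ) (b2 : Fin 2 → ℝ),
      ∀ (n : ℕ) (s : Fin n → ℕ) (t : ℕ), 0 < t → (∀ i, 0 < s i) →
        ∃ (X : Fin (n + 2) → Fin 1 → ℝ) (G : IncGraph (Fin (n + 2)))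
          (v : Fin (n + 2)) (F : Finset (Fin (n + 2) × Fin (n + 2)))
          (Δ : ℕ) (c : Fin 2),
          G.unk = ∅ ∧
          ((∀ G' : IncGraph (Fin (n + 2)), G'.unk = ∅ → inPerturb G G' F Δ →
              ∀ c' : Fin 2,
                layer C2 A2 b2 G' (fun u => layer C1 A1 b1 G' X u) v c' ≤
                  layer C2 A2 b2 G' (fun u => layer C1 A1 b1 G' X u) v c) ↔
            ¬ ∃ T : Finset (Fin n), ∑ i ∈ T, s i = t) := by
  classical
  refine ⟨0, A1m, 0, C2m, 0, b2v, ?_⟩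
  intro n s t ht hs
  set E : Finset (Fin (n + 2) × Fin (n + 2)) :=
    Finset.univ.filter (fun p => p.2 = 0 ∧ p.1 ≠ 0) with hE
  set F : Finset (Fin (n + 2) × Fin (n + 2)) :=
    Finset.univ.filter (fun p => p.2 = 0 ∧ p.1 ≠ 0 ∧ p.1 ≠ 1) with hF
  refine ⟨fun u _ => feat n s t u, mkG E, 0, F, n, 0, rfl, ?_⟩
  have hFcard : F.card ≤ n := by
    have hsub : F ⊆ Finset.univ.image
        (fun i : Fin n => ((i.succ.succ : Fin (n + 2)), (0 : Fin (n + 2)))) := by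
      intro p hp
      simp only [hF, Finset.mem_filter, Finset.mem_univ, true_and] at hp
      obtain ⟨h2, h0, h1⟩ := hp
      obtain ⟨i, hi⟩ := exists_ss p.1 h0 h1
      simp only [Finset.mem_image]
      exact ⟨i, Finset.mem_univ i, Prod.ext hi.symm h2.symm⟩
    calc F.card ≤ _ := Finset.card_le_card hsub
      _ ≤ Finset.univ.card := Finset.card_image_le
      _ = n := by simp
  have hnb : ∀ G' : IncGraph (Fin (n + 2)),
      ((1 : Fin (n + 2)), (0 : Fin (n + 2))) ∈ G'.edges →
      nbrSum (k := 1) G' (fun u _ => feat n s t u) (0 : Fin (n + 2)) (0 : Fin 1)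
        = -(t : ℝ) + ∑ i ∈ Finset.univ.filter
            (fun i : Fin n => ((i.succ.succ : Fin (n + 2)), (0 : Fin (n + 2))) ∈ G'.edges),
            (s i : ℝ) := by
    intro G' h1
    simp only [nbrSum, Finset.sum_apply]
    exact nbr_eq s t G'.edges h1
  constructor
  · rintro hrob ⟨T, hT⟩
    set E' : Finset (Fin (n + 2) × Fin (n + 2)) :=
      insert ((1 : Fin (n + 2)), (0 : Fin (n + 2)))
        (T.image (fun i => ((i.succ.succ : Fin (n + 2)), (0 : Fin (n + 2))))) with hE'
    have hE'subE : E' ⊆ E := by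
      intro p hp
      simp only [hE', Finset.mem_insert, Finset.mem_image] at hp
      rcases hp with rfl | ⟨i, _, rfl⟩ <;>
        simp [hE, Fin.succ_ne_zero, one_ne_zero]
    have hmem1 : ((1 : Fin (n + 2)), (0 : Fin (n + 2))) ∈ E' :=
      Finset.mem_insert_self _ _
    have hpert : inPerturb (mkG E) (mkG E') F n := by
      refine ⟨?_, ?_, ?_⟩
      · intro p hp
        simp only [mkG, Finset.mem_sdiff, hE, hF, Finset.mem_filter, Finset.mem_univ,
          true_and] at hp
        obtain ⟨⟨h2, h1⟩, hnf⟩ := hp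
        have hpe : p.1 = 1 := by tauto
        have hp' : p = ((1 : Fin (n + 2)), (0 : Fin (n + 2))) := Prod.ext hpe h2
        rw [hp']; exact hmem1
      · intro p hp; exact Finset.mem_union_left _ (hE'subE hp)
      · have h1 : (mkG E').edges \ (mkG (V := Fin (n + 2)) E).edges = ∅ :=
          Finset.sdiff_eq_empty_iff_subset.mpr hE'subE
        have h2 : (mkG (V := Fin (n + 2)) E).edges \ (mkG E').edges ⊆ F := by
          intro p hp
          simp only [mkG, Finset.mem_sdiff] at hp
          obtain ⟨hpE, hpE'⟩ := hp
          simp only [hE, Finset.mem_filter, Finset.mem_univ, true_and] at hpE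
          simp only [hF, Finset.mem_filter, Finset.mem_univ, true_and]
          refine ⟨hpE.1, hpE.2, ?_⟩
          intro hp1
          have hpp : p = ((1 : Fin (n + 2)), (0 : Fin (n + 2))) := Prod.ext hp1 hpE.1
          exact hpE' (hpp ▸ hmem1)
        rw [h1]
        simpa using le_trans (Finset.card_le_card h2) hFcard
    have hTT : Finset.univ.filter
        (fun i : Fin n => ((i.succ.succ : Fin (n + 2)), (0 : Fin (n + 2))) ∈ E') = T := by
      ext i
      simp only [Finset.mem_filter, Finset.mem_univ, true_and, hE', Finset.mem_insert,
        Finset.mem_image, Prod.mk.injEq]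
      constructor
      · rintro (⟨h1, -⟩ | ⟨j, hj, hj2, -⟩)
        · exact absurd h1 (ss_ne_one i)
        · rwa [Fin.succ_injective _ (Fin.succ_injective _ hj2)] at hj
      · intro hi; right; exact ⟨i, hi, rfl, trivial⟩
    have ha : nbrSum (k := 1) (mkG E') (fun u _ => feat n s t u) (0 : Fin (n + 2)) (0 : Fin 1) = 0 := by
      rw [hnb (mkG E') hmem1]
      have hc : (∑ i ∈ Finset.univ.filter
          (fun i : Fin n => ((i.succ.succ : Fin (n + 2)), (0 : Fin (n + 2))) ∈ E'),
          (s i : ℝ)) = (t : ℝ) := by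
        rw [hTT, ← Nat.cast_sum, hT]
      rw [show (mkG E').edges = E' from rfl, hc]; ring
    have hcon := hrob (mkG E') rfl hpert 1
    rw [eval_out, eval_out, ha] at hcon
    norm_num [relu] at hcon
  · intro hns G' hunk hpert c'
    have h1mem : ((1 : Fin (n + 2)), (0 : Fin (n + 2))) ∈ G'.edges := by
      apply hpert.1
      simp [mkG, hE, hF, Finset.mem_sdiff, one_ne_zero]
    rw [eval_out, eval_out, hnb G' h1mem]
    set m := ∑ i ∈ Finset.univ.filter
        (fun i : Fin n => ((i.succ.succ : Fin (n + 2)), (0 : Fin (n + 2))) ∈ G'.edges),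
        s i with hm
    have hcast : (∑ i ∈ Finset.univ.filter
        (fun i : Fin n => ((i.succ.succ : Fin (n + 2)), (0 : Fin (n + 2))) ∈ G'.edges),
        (s i : ℝ)) = (m : ℝ) := by rw [hm, Nat.cast_sum]
    rw [hcast]
    have hmne : m ≠ t := fun h => hns ⟨_, h⟩
    set a : ℝ := -(t : ℝ) + (m : ℝ) with hadef
    have hkey : (1 : ℝ) ≤ relu a + relu (-a) := by
      have hra : a ≤ relu a := le_max_left _ _
      have hra' : -a ≤ relu (-a) := le_max_left _ _
      have h0a : (0 : ℝ) ≤ relu a := le_max_right _ _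
      have h0a' : (0 : ℝ) ≤ relu (-a) := le_max_right _ _
      rcases lt_or_gt_of_ne hmne with h | h
      · have : (m : ℝ) + 1 ≤ (t : ℝ) := by exact_mod_cast h
        have : (1 : ℝ) ≤ -a := by rw [hadef]; linarith
        linarith
      · have : (t : ℝ) + 1 ≤ (m : ℝ) := by exact_mod_cast h
        have : (1 : ℝ) ≤ a := by rw [hadef]; linarith
        linarith
    have hfin : (1 : ℝ)/4 ≤ relu (relu a + relu (-a) - 1/2) := by
      have h1 : relu a + relu (-a) - 1/2 ≤ relu (relu a + relu (-a) - 1/2) :=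
        le_max_left _ _
      linarith
    rw [if_pos rfl]
    split
    · exact le_rfl
    · linarith [hfin]
end

section
/- Mean lower-bound correctness: let S1 be a nonempty finite multiset of reals and S2 a finite multiset of reals with elements s_1 ≥ ... ≥ s_k in descending order. For every sub-multiset T ⊆ S2, the mean of S1 ∪ T is at least min_{0 ≤ i ≤ k} ( (Σ_{s∈S1} s + Σ_{k−i < j ≤ k} s_j) / (|S1| + i) ), i.e., the minimum over adding suffixes (the i smallest elements) of the descending order. -/
/-! Replacing the elements of `T` by the `|T|` smallest elements of `S2` can only lower the sum
of `S1 ∪ T` and leaves its cardinality unchanged, so the mean of `S1 ∪ T` is at least the mean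
obtained from the suffix of length `|T|`. -/

variable {α : Type*} [AddCommMonoid α] [PartialOrder α] [IsOrderedAddMonoid α]

theorem List.sum_take_length_le_sum_of_sublist {l l' : List α} (hl : l.Pairwise (· ≤ ·))
    (h : l'.Sublist l) : (l.take l'.length).sum ≤ l'.sum := by
  induction l generalizing l' with
  | nil => simp_all
  | cons a l ih =>
    obtain ⟨ha, hl'⟩ := List.pairwise_cons.mp hl
    rcases l' with _ | ⟨b, l''⟩
    · simp
    rcases List.sublist_cons_iff.mp h with h | ⟨r, hr, hsub⟩
    · have hab : a ≤ b := ha b (h.subset List.mem_cons_self)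
      have htail : l''.Sublist l := (List.sublist_cons_self b l'').trans h
      simpa using add_le_add hab (ih hl' htail)
    · obtain ⟨rfl, rfl⟩ := List.cons_eq_cons.mp hr
      simpa using add_le_add_right (ih hl' hsub) b

theorem Multiset.sum_drop_length_sub_card_le_sum {l : List α} {T : Multiset α}
    (hl : l.Pairwise (· ≥ ·)) (hT : T ≤ (l : Multiset α)) :
    (l.drop (l.length - Multiset.card T)).sum ≤ T.sum := by
  induction T using Quotient.inductionOn with
  | h t =>
    obtain ⟨l', hperm, hsub⟩ := Multiset.coe_le.mp hT
    have key := List.sum_take_length_le_sum_of_sublist (List.pairwise_reverse.mpr hl)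
      (List.reverse_sublist.mpr hsub)
    rw [List.length_reverse, List.take_reverse, List.sum_reverse, List.sum_reverse] at key
    simpa [← hperm.length_eq, hperm.sum_eq] using key

theorem stmt18_general (S1 T : Multiset ℝ) (l : List ℝ) (hl : List.Pairwise (· ≥ ·) l)
    (hT : T ≤ (l : Multiset ℝ)) :
    ∃ i ≤ l.length,
      (S1.sum + (l.drop (l.length - i)).sum) / (((Multiset.card S1 : ℕ) : ℝ) + (i : ℝ)) ≤
        (S1 + T).sum / ((Multiset.card (S1 + T) : ℕ) : ℝ) := by
  refine ⟨Multiset.card T, by simpa using Multiset.card_le_card hT, ?_⟩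
  rw [Multiset.sum_add, Multiset.card_add, Nat.cast_add]
  exact div_le_div_of_nonneg_right
    (add_le_add_right (Multiset.sum_drop_length_sub_card_le_sum hl hT) _) (by positivity)

/-- for `S1` nonempty and `S2` given as a descending list `l`
(`s_1 ≥ ... ≥ s_k`), for every sub-multiset `T` of `S2`, the mean of `S1 ∪ T` is
at least the minimum over `0 ≤ i ≤ k` of `(Σ S1 + Σ suffix of length i)/(|S1| + i)`
(suffixes, i.e. the `i` smallest elements, of the descending order). -/
theorem stmt18 (S1 T : Multiset ℝ) (l : List ℝ) (hl : List.Pairwise (· ≥ ·) l)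
    (hS1 : S1 ≠ 0) (hT : T ≤ (l : Multiset ℝ)) :
    ∃ i ≤ l.length,
      (S1.sum + (l.drop (l.length - i)).sum) / (((Multiset.card S1 : ℕ) : ℝ) + (i : ℝ)) ≤
        (S1 + T).sum / ((Multiset.card (S1 + T) : ℕ) : ℝ) :=
  stmt18_general S1 T l hl hT
end
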